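/- Let n > 3 be odd, let k be an integer with 0 ≤ k ≤ (n−1)/2, and let M ∈ {0,…,(n−3)/2}. Define f(x) = −x/tan((2M+1)θ_n) + r_n cos θ_n / sin((2M+1)θ_n). For every p ∈ [0,1] and all ω⁰, ω¹ ∈ Ω_n such that the first coordinate x of pω⁰ + (1−p)ω¹ lies in [r_n cos((2M+2)θ_n), r_n cos(2Mθ_n)], the quantity S₁ = p⟨Q₁⁰, ω⁰⟩ + (1−p)⟨Q₁¹, ω¹⟩ satisfies 1/2 − R_n r_n sin(kθ_n) f(x) ≤ S₁ ≤ 1/2 + R_n r_n sin(kθ_n) f(x). -/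

import Mathlib

noncomputable section

/-- Standard inner product on `ℝ³`. -/
def dot3 (v w : Fin 3 → ℝ) : ℝ := ∑ i, v i * w i

/-- The angle `θ_n = π / n`. -/
def thetaN (n : ℕ) : ℝ := Real.pi / n

/-- `r_n = (cos θ_n)^{-1/2}`. -/
def rN (n : ℕ) : ℝ := Real.sqrt (Real.cos (thetaN n))⁻¹

/-- `R_n = 1 / (1 + r_n²)`. -/
def RN (n : ℕ) : ℝ := 1 / (1 + rN n ^ 2)

/-- The pure states `ω_n(i)` of the regular polygon theory. -/
def omegaN (n i : ℕ) : Fin 3 → ℝ :=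
  ![rN n * Real.cos (2 * (i : ℝ) * thetaN n), rN n * Real.sin (2 * (i : ℝ) * thetaN n), 1]

/-- The state space `Ω_n`, the convex hull of the pure states. -/
def OmegaN (n : ℕ) : Set (Fin 3 → ℝ) :=
  convexHull ℝ {v | ∃ i < n, v = omegaN n i}

/-- The unit effect `u = (0,0,1)`. -/
def uEff : Fin 3 → ℝ := ![0, 0, 1]

/-- The pure effects `e_n(i)` (separate formulas for even and odd `n`). -/
def eN (n i : ℕ) : Fin 3 → ℝ :=
  if Even n then
    (1 / 2 : ℝ) • ![rN n * Real.cos ((2 * (i : ℝ) + 1) * thetaN n),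
                    rN n * Real.sin ((2 * (i : ℝ) + 1) * thetaN n), 1]
  else
    RN n • ![rN n * Real.cos (2 * (i : ℝ) * thetaN n),
             rN n * Real.sin (2 * (i : ℝ) * thetaN n), 1]

/-- The complementary effect `ē_n(i) = u - e_n(i)`. -/
def eBarN (n i : ℕ) : Fin 3 → ℝ := uEff - eN n i

/-- The effect space `E_n`. -/
def EffN (n : ℕ) : Set (Fin 3 → ℝ) :=
  {f | ∀ ω ∈ OmegaN n, dot3 f ω ∈ Set.Icc (0 : ℝ) 1}

/-- The positive cone `V_{n+}` generated by the state space. -/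
def VposN (n : ℕ) : Set (Fin 3 → ℝ) :=
  {x | ∃ c : ℝ, 0 ≤ c ∧ ∃ ω ∈ OmegaN n, x = c • ω}

/-- The dual cone `V*_{n+}` generated by the effect space. -/
def VdualN (n : ℕ) : Set (Fin 3 → ℝ) :=
  {x | ∃ c : ℝ, 0 ≤ c ∧ ∃ f ∈ EffN n, x = c • f}

/-- A state of `Ω_n ⊗_max Ω_n`, identified with a normalized cone-preserving linear map. -/
def IsState (n : ℕ) (η : (Fin 3 → ℝ) →ₗ[ℝ] (Fin 3 → ℝ)) : Prop :=
  (∀ x ∈ VdualN n, η x ∈ VposN n) ∧ dot3 uEff (η uEff) = 1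

/-- A binary observable on `Ω_n`: a pair of effects summing to the unit effect. -/
def IsObservable (n : ℕ) (A : (Fin 3 → ℝ) × (Fin 3 → ℝ)) : Prop :=
  A.1 ∈ EffN n ∧ A.2 ∈ EffN n ∧ A.1 + A.2 = uEff

/-- The observable `E_n(i) = (e_n(i), ē_n(i))`. -/
def EObs (n i : ℕ) : (Fin 3 → ℝ) × (Fin 3 → ℝ) := (eN n i, eBarN n i)

/-- The correlator `E(st) = Σ_{a,b} (-1)^{a+b} ⟨B^b, η(A^a)⟩`. -/
def corr (η : (Fin 3 → ℝ) →ₗ[ℝ] (Fin 3 → ℝ)) (A B : (Fin 3 → ℝ) × (Fin 3 → ℝ)) : ℝ :=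
  dot3 B.1 (η A.1) - dot3 B.2 (η A.1) - dot3 B.1 (η A.2) + dot3 B.2 (η A.2)

/-- The CHSH value `C[η; A₀,A₁; B₀,B₁] = E(00) + E(01) + E(10) - E(11)`. -/
def CHSH (η : (Fin 3 → ℝ) →ₗ[ℝ] (Fin 3 → ℝ))
    (A0 A1 B0 B1 : (Fin 3 → ℝ) × (Fin 3 → ℝ)) : ℝ :=
  corr η A0 B0 + corr η A0 B1 + corr η A1 B0 - corr η A1 B1

/-- `GL(Ω_n)`: linear bijections of `ℝ³` preserving the state space. -/
def GLOmega (n : ℕ) : Set ((Fin 3 → ℝ) →ₗ[ℝ] (Fin 3 → ℝ)) :=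
  {T | Function.Bijective T ∧ T '' OmegaN n = OmegaN n}

/-- The order isomorphism `T_n`: a rotation by `θ_n` for even `n`, the identity for odd `n`. -/
def TN (n : ℕ) : (Fin 3 → ℝ) →ₗ[ℝ] (Fin 3 → ℝ) :=
  if Even n then
    Matrix.toLin' !![Real.cos (thetaN n), Real.sin (thetaN n), 0;
                     -Real.sin (thetaN n), Real.cos (thetaN n), 0;
                     0, 0, 1]
  else LinearMap.id

/-- Maximally entangled states: elements of `T_n · GL(Ω_n)`. -/
def MaxEnt (n : ℕ) (η : (Fin 3 → ℝ) →ₗ[ℝ] (Fin 3 → ℝ)) : Prop :=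
  ∃ T ∈ GLOmega n, η = (TN n).comp T

/-- The effect `Q₁⁰ = (0, R_n r_n sin(kθ_n), 1/2)` (rotated coordinates). -/
def Q10 (n k : ℕ) : Fin 3 → ℝ :=
  ![0, RN n * rN n * Real.sin ((k : ℝ) * thetaN n), 1 / 2]

/-- The effect `Q₁¹ = (0, −R_n r_n sin(kθ_n), 1/2)` (rotated coordinates). -/
def Q11 (n k : ℕ) : Fin 3 → ℝ :=
  ![0, -(RN n * rN n * Real.sin ((k : ℝ) * thetaN n)), 1 / 2]

/-- The boundary function `f(x) = −x/tan((2M+1)θ_n) + r_n cos θ_n / sin((2M+1)θ_n)`. -/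
def fBdry (n M : ℕ) (x : ℝ) : ℝ :=
  -x / Real.tan ((2 * (M : ℝ) + 1) * thetaN n)
    + rN n * Real.cos (thetaN n) / Real.sin ((2 * (M : ℝ) + 1) * thetaN n)

/-!
The lines `x cos (jθ) + y sin (jθ) = r cos θ`, `j` odd, carry the edges of the polygon `Ω_n`;
the two edges with `j = ±(2M+1)` give `|y| ≤ f(x)` on `Ω_n`. Since
`⟨Q₁⁰, ω⟩ = 1/2 + c y` and `⟨Q₁¹, ω⟩ = 1/2 - c y` with `c = R_n r_n sin (kθ) ≥ 0`, and `f` is affine,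
averaging gives `|S₁ - 1/2| ≤ c f(x)`.
-/

open Real

lemma cos_le_cos_of_le_of_le_two_pi_sub {θ x : ℝ} (hθ : 0 ≤ θ) (hθx : θ ≤ x)
    (hx : x ≤ 2 * π - θ) : cos x ≤ cos θ := by
  rcases le_total x π with hxπ | hπx
  · exact cos_le_cos_of_nonneg_of_le_pi hθ hxπ hθx
  · rw [← cos_two_pi_sub x]
    exact cos_le_cos_of_nonneg_of_le_pi hθ (by linarith) (by linarith)

/-- Odd multiples of `π / n` stay at angular distance at least `π / n` from `2πℤ`. -/
lemma cos_odd_mul_pi_div_le {n : ℕ} (hn : 0 < n) {j : ℤ} (hj : Odd j) :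
    cos (j * (π / n)) ≤ cos (π / n) := by
  have h2n : (0 : ℤ) < 2 * n := by positivity
  set m := j % (2 * n)
  have hm_odd : Odd m := by
    rw [Int.odd_iff] at hj ⊢
    rw [Int.emod_emod_of_dvd j (dvd_mul_right 2 _), hj]
  have hm_pos : 1 ≤ m := by
    obtain ⟨t, ht⟩ := hm_odd
    have := Int.emod_nonneg j h2n.ne'
    omega
  have hm_lt : m ≤ 2 * n - 1 := by have := Int.emod_lt_of_pos j h2n; omega
  have hj_eq : (j : ℝ) * (π / n) = m * (π / n) + (j / (2 * n) : ℤ) * (2 * π) := by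
    have hdiv : (m : ℝ) + 2 * n * (j / (2 * n) : ℤ) = j := by
      exact_mod_cast Int.emod_add_mul_ediv j (2 * n)
    rw [← hdiv]
    field_simp
  have hθ : 0 < π / n := by positivity
  have hm_pos' : (1 : ℝ) ≤ m := by exact_mod_cast hm_pos
  have hm_lt' : (m : ℝ) ≤ 2 * n - 1 := by exact_mod_cast hm_lt
  have hnθ : (n : ℝ) * (π / n) = π := by field_simp
  rw [hj_eq, cos_add_int_mul_two_pi]
  apply cos_le_cos_of_le_of_le_two_pi_sub hθ.le <;> nlinarith

lemma thetaN_pos {n : ℕ} (hn : 0 < n) : 0 < thetaN n := by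
  unfold thetaN; positivity

lemma natCast_mul_thetaN {n : ℕ} (hn : 0 < n) : (n : ℝ) * thetaN n = π := by
  unfold thetaN; field_simp

lemma sin_mul_thetaN_nonneg {n k : ℕ} (hk : k ≤ n) : 0 ≤ sin (k * thetaN n) := by
  rcases n.eq_zero_or_pos with rfl | hn
  · simp [thetaN]
  have hθ := thetaN_pos hn
  have hk' : (k : ℝ) ≤ n := by exact_mod_cast hk
  apply sin_nonneg_of_nonneg_of_le_pi (by positivity)
  nlinarith [natCast_mul_thetaN hn]

lemma sin_odd_mul_thetaN_pos {n M : ℕ} (hn : 3 < n) (hM : M ≤ (n - 3) / 2) :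
    0 < sin ((2 * M + 1) * thetaN n) := by
  have hθ := thetaN_pos (by omega : 0 < n)
  have hMn : ((2 * M + 1 : ℕ) : ℝ) < n := by exact_mod_cast (by omega : 2 * M + 1 < n)
  push_cast at hMn
  apply sin_pos_of_pos_of_lt_pi (by positivity)
  nlinarith [natCast_mul_thetaN (by omega : 0 < n)]

lemma omegaN_edge_le {n : ℕ} (hn : 0 < n) (i : ℕ) {j : ℤ} (hj : Odd j) :
    omegaN n i 0 * cos (j * thetaN n) + omegaN n i 1 * sin (j * thetaN n)
      ≤ rN n * cos (thetaN n) * omegaN n i 2 := by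
  have hodd : Odd (2 * (i : ℤ) - j) := by
    rw [Int.odd_sub']; simp [hj]
  have key := cos_odd_mul_pi_div_le hn hodd
  have harg : ((2 * (i : ℤ) - j : ℤ) : ℝ) * (π / n) = 2 * i * thetaN n - j * thetaN n := by
    unfold thetaN; push_cast; ring
  rw [harg, cos_sub] at key
  change _ ≤ cos (thetaN n) at key
  simp only [omegaN, Matrix.cons_val_zero, Matrix.cons_val_one, Matrix.cons_val_two,
    Matrix.head_cons, Matrix.tail_cons]
  have hr : 0 ≤ rN n := sqrt_nonneg _
  linarith [mul_le_mul_of_nonneg_left key hr]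

lemma OmegaN_subset {n : ℕ} {S : Set (Fin 3 → ℝ)} (hS : Convex ℝ S)
    (h : ∀ i, omegaN n i ∈ S) : OmegaN n ⊆ S :=
  convexHull_min (by rintro _ ⟨i, -, rfl⟩; exact h i) hS

lemma two_eq_one_of_mem_OmegaN {n : ℕ} {w : Fin 3 → ℝ} (hw : w ∈ OmegaN n) : w 2 = 1 :=
  OmegaN_subset (S := {w | w 2 = 1})
    (convex_hyperplane (f := fun w : Fin 3 → ℝ ↦ w 2) ⟨fun _ _ ↦ rfl, fun _ _ ↦ rfl⟩ 1)
    (fun _ ↦ rfl) hw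

lemma edge_le_of_mem_OmegaN {n : ℕ} (hn : 0 < n) {j : ℤ} (hj : Odd j) {w : Fin 3 → ℝ}
    (hw : w ∈ OmegaN n) :
    w 0 * cos (j * thetaN n) + w 1 * sin (j * thetaN n) ≤ rN n * cos (thetaN n) := by
  have hS : Convex ℝ {w : Fin 3 → ℝ | w 0 * cos (j * thetaN n) + w 1 * sin (j * thetaN n)
      - rN n * cos (thetaN n) * w 2 ≤ 0} :=
    convex_halfSpace_le ⟨fun u v ↦ by simp only [Pi.add_apply]; ring,
      fun c u ↦ by simp only [Pi.smul_apply, smul_eq_mul]; ring⟩ 0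
  have := OmegaN_subset hS (fun i ↦ sub_nonpos.2 (omegaN_edge_le hn i hj)) hw
  simpa [two_eq_one_of_mem_OmegaN hw, sub_nonpos] using this

lemma fBdry_eq (n M : ℕ) (x : ℝ) :
    fBdry n M x = (rN n * cos (thetaN n) - x * cos ((2 * M + 1) * thetaN n))
      / sin ((2 * M + 1) * thetaN n) := by
  rw [fBdry, tan_eq_sin_div_cos, div_div_eq_mul_div]
  ring

lemma fBdry_convex_comb (n M : ℕ) (p x y : ℝ) :
    fBdry n M (p * x + (1 - p) * y) = p * fBdry n M x + (1 - p) * fBdry n M y := by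
  simp only [fBdry]; ring

lemma abs_le_fBdry_of_mem_OmegaN {n M : ℕ} (hn : 3 < n) (hM : M ≤ (n - 3) / 2)
    {w : Fin 3 → ℝ} (hw : w ∈ OmegaN n) : |w 1| ≤ fBdry n M (w 0) := by
  have hodd : Odd (2 * (M : ℤ) + 1) := odd_two_mul_add_one _
  have hplus := edge_le_of_mem_OmegaN (by omega) hodd hw
  have hminus := edge_le_of_mem_OmegaN (by omega) hodd.neg hw
  push_cast at hplus hminus
  rw [neg_mul, cos_neg, sin_neg] at hminus
  rw [fBdry_eq, le_div_iff₀ (sin_odd_mul_thetaN_pos hn hM)]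
  rcases abs_choice (w 1) with h | h <;> rw [h] <;> linarith

lemma dot3_Q10 {n : ℕ} (k : ℕ) {w : Fin 3 → ℝ} (hw : w ∈ OmegaN n) :
    dot3 (Q10 n k) w = 1 / 2 + RN n * rN n * sin (k * thetaN n) * w 1 := by
  simp only [dot3, Q10, Fin.sum_univ_three, Matrix.cons_val_zero, Matrix.cons_val_one,
    Matrix.cons_val, two_eq_one_of_mem_OmegaN hw]
  ring

lemma dot3_Q11 {n : ℕ} (k : ℕ) {w : Fin 3 → ℝ} (hw : w ∈ OmegaN n) :
    dot3 (Q11 n k) w = 1 / 2 - RN n * rN n * sin (k * thetaN n) * w 1 := by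
  simp only [dot3, Q11, Fin.sum_univ_three, Matrix.cons_val_zero, Matrix.cons_val_one,
    Matrix.cons_val, two_eq_one_of_mem_OmegaN hw]
  ring

theorem S1_bounds_general (n : ℕ) (hn : 3 < n)
    (k : ℕ) (hk : k ≤ (n - 1) / 2) (M : ℕ) (hM : M ≤ (n - 3) / 2)
    (p : ℝ) (hp : p ∈ Set.Icc (0 : ℝ) 1)
    (w0 w1 : Fin 3 → ℝ) (hw0 : w0 ∈ OmegaN n) (hw1 : w1 ∈ OmegaN n) :
    1 / 2 - RN n * rN n * Real.sin ((k : ℝ) * thetaN n)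
        * fBdry n M ((p • w0 + (1 - p) • w1) 0)
      ≤ p * dot3 (Q10 n k) w0 + (1 - p) * dot3 (Q11 n k) w1 ∧
    p * dot3 (Q10 n k) w0 + (1 - p) * dot3 (Q11 n k) w1
      ≤ 1 / 2 + RN n * rN n * Real.sin ((k : ℝ) * thetaN n)
          * fBdry n M ((p • w0 + (1 - p) • w1) 0) := by
  obtain ⟨hp0, hp1⟩ := hp
  set c := RN n * rN n * sin (k * thetaN n)
  have hc : 0 ≤ c := mul_nonneg (mul_nonneg (by unfold RN; positivity) (sqrt_nonneg _))
    (sin_mul_thetaN_nonneg (by omega))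
  have hy0 := abs_le_fBdry_of_mem_OmegaN hn hM hw0
  have hy1 := abs_le_fBdry_of_mem_OmegaN hn hM hw1
  have hS : |p * dot3 (Q10 n k) w0 + (1 - p) * dot3 (Q11 n k) w1 - 1 / 2|
      ≤ c * fBdry n M ((p • w0 + (1 - p) • w1) 0) := by
    rw [dot3_Q10 k hw0, dot3_Q11 k hw1, Pi.add_apply, Pi.smul_apply, Pi.smul_apply,
      smul_eq_mul, smul_eq_mul, fBdry_convex_comb]
    calc _ = c * |p * w0 1 - (1 - p) * w1 1| := by
          rw [← abs_of_nonneg hc, ← abs_mul]; congr 1; ring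
      _ ≤ c * (p * |w0 1| + (1 - p) * |w1 1|) := by
          gcongr
          refine (abs_sub _ _).trans_eq ?_
          rw [abs_mul, abs_mul, abs_of_nonneg hp0, abs_of_nonneg (sub_nonneg.2 hp1)]
      _ ≤ c * (p * fBdry n M (w0 0) + (1 - p) * fBdry n M (w1 0)) := by
          have := sub_nonneg.2 hp1
          gcongr
  constructor <;> linarith [abs_le.1 hS]

/-- bounds for `S₁ = p⟨Q₁⁰, ω⁰⟩ + (1−p)⟨Q₁¹, ω¹⟩` in terms of the first
coordinate `x` of `pω⁰ + (1−p)ω¹` when `x` lies in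
`[r_n cos((2M+2)θ_n), r_n cos(2Mθ_n)]`. -/
theorem S1_bounds (n : ℕ) (hodd : Odd n) (hn : 3 < n)
    (k : ℕ) (hk : k ≤ (n - 1) / 2) (M : ℕ) (hM : M ≤ (n - 3) / 2)
    (p : ℝ) (hp : p ∈ Set.Icc (0 : ℝ) 1)
    (w0 w1 : Fin 3 → ℝ) (hw0 : w0 ∈ OmegaN n) (hw1 : w1 ∈ OmegaN n)
    (hx : (p • w0 + (1 - p) • w1) 0 ∈
      Set.Icc (rN n * Real.cos ((2 * (M : ℝ) + 2) * thetaN n))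
              (rN n * Real.cos (2 * (M : ℝ) * thetaN n))) :
    1 / 2 - RN n * rN n * Real.sin ((k : ℝ) * thetaN n)
        * fBdry n M ((p • w0 + (1 - p) • w1) 0)
      ≤ p * dot3 (Q10 n k) w0 + (1 - p) * dot3 (Q11 n k) w1 ∧
    p * dot3 (Q10 n k) w0 + (1 - p) * dot3 (Q11 n k) w1
      ≤ 1 / 2 + RN n * rN n * Real.sin ((k : ℝ) * thetaN n)
          * fBdry n M ((p • w0 + (1 - p) • w1) 0) :=
  S1_bounds_general n hn k hk M hM p hp w0 w1 hw0 hw1
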